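/- arXiv:math/9410205 — 2 statements merged into one kernel-verified Lean document; each statement's English description precedes it below -/
import Mathlib

section
/- Let Ω be a compact Hausdorff space and E a Banach space. Let H be a (V)-subset of M(Ω,E*) ≅ C(Ω,E)* and let (A_m)_{m∈H} be a collection of Borel subsets of Ω indexed by H. Then the subset { m·χ_{A_m} : m ∈ H } is again a (V)-subset of M(Ω,E*), where m·χ_A denotes the measure B ↦ m(A ∩ B). -/
open Filter Topology MeasureTheory

set_option autoImplicit false

noncomputable section

/-- A series `∑ xₙ` in a Banach space `X` is *weakly unconditionally Cauchy* (WUC) if for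
every continuous linear functional `f` on `X`, the series `∑ |f (xₙ)|` converges. -/
def IsWUCSeries (X : Type*) [NormedAddCommGroup X] [NormedSpace ℝ X] (x : ℕ → X) : Prop :=
  ∀ f : StrongDual ℝ X, Summable fun n => |f (x n)|

/-- A subset `H` of the dual of `X` is a *(V)-subset* if
`limₙ sup_{f ∈ H} |f (xₙ)| = 0` for every WUC series `∑ xₙ` in `X`. -/
def IsVSet (X : Type*) [NormedAddCommGroup X] [NormedSpace ℝ X]
    (H : Set (StrongDual ℝ X)) : Prop :=
  ∀ x : ℕ → X, IsWUCSeries X x →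
    ∀ ε : ℝ, 0 < ε → ∃ N : ℕ, ∀ n ≥ N, ∀ f ∈ H, |f (x n)| ≤ ε

/-- An element of `M(Ω,E*) ≅ C(Ω,E)*`: a weak*-regular `E*`-valued measure `meas` of
bounded variation on the Borel sets of `Ω`, bundled together with the functional
`toFunctional ∈ C(Ω,E)*` it represents (integration against `meas`).  The compatibility is
encoded on functions of the form `g • x` (`g ∈ C(Ω)`, `x ∈ E`), whose span is dense in
`C(Ω,E)`: for each `x ∈ E`, the scalar measure `A ↦ meas(A)(x)` is a regular (difference of
two finite regular Borel measures) measure against which `toFunctional` integrates such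
functions. -/
structure RieszPair (Ω : Type*) [TopologicalSpace Ω] [CompactSpace Ω] [T2Space Ω]
    [MeasurableSpace Ω] [BorelSpace Ω]
    (E : Type*) [NormedAddCommGroup E] [NormedSpace ℝ E] where
  toFunctional : StrongDual ℝ C(Ω, E)
  meas : Set Ω → StrongDual ℝ E
  meas_empty : meas ∅ = 0
  boundedVariation : ∃ C : ℝ, ∀ (n : ℕ) (B : Fin n → Set Ω),
    (∀ i, MeasurableSet (B i)) → Pairwise (Function.onFun Disjoint B) →
    ∑ i, ‖meas (B i)‖ ≤ C
  scalarMeasure : ∀ x : E, ∃ μ ν : Measure Ω,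
    IsFiniteMeasure μ ∧ IsFiniteMeasure ν ∧ μ.Regular ∧ ν.Regular ∧
    (∀ A : Set Ω, MeasurableSet A → meas A x = (μ A).toReal - (ν A).toReal) ∧
    (∀ g : C(Ω, ℝ),
      toFunctional ⟨fun ω => g ω • x, g.continuous.smul continuous_const⟩
        = ∫ ω, g ω ∂μ - ∫ ω, g ω ∂ν)

set_option linter.unusedSectionVars false

section AuxiliaryLemmas
open Set
open scoped ENNReal
set_option maxHeartbeats 1000000


variable {Ω : Type*} [TopologicalSpace Ω] [CompactSpace Ω] [T2Space Ω]
  [MeasurableSpace Ω] [BorelSpace Ω]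
  {E : Type*} [NormedAddCommGroup E] [NormedSpace ℝ E]
/-- `g • e` as a continuous map. -/
def tens (g : C(Ω, ℝ)) (e : E) : C(Ω, E) :=
  ⟨fun ω => g ω • e, g.continuous.smul continuous_const⟩

/-- Pointwise scalar multiplication of a continuous vector-valued map. -/
def cmul (φ : C(Ω, ℝ)) (f : C(Ω, E)) : C(Ω, E) :=
  ⟨fun ω => φ ω • f ω, (map_continuous φ).smul (map_continuous f)⟩

@[simp] lemma tens_apply (g : C(Ω, ℝ)) (e : E) (ω : Ω) : tens g e ω = g ω • e := rfl
@[simp] lemma cmul_apply (φ : C(Ω, ℝ)) (f : C(Ω, E)) (ω : Ω) : cmul φ f ω = φ ω • f ω := rfl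

lemma cmul_tens (φ g : C(Ω, ℝ)) (e : E) : cmul φ (tens g e) = tens (φ * g) e := by
  ext ω; simp [smul_smul]

lemma cmul_sub (φ : C(Ω, ℝ)) (f h : C(Ω, E)) :
    cmul φ (f - h) = cmul φ f - cmul φ h := by
  ext ω; simp [smul_sub]

lemma cmul_sum {ι : Type*} (s : Finset ι) (φ : C(Ω, ℝ)) (f : ι → C(Ω, E)) :
    cmul φ (∑ i ∈ s, f i) = ∑ i ∈ s, cmul φ (f i) := by
  ext ω; simp [Finset.smul_sum]

lemma norm_cmul_le (φ : C(Ω, ℝ)) (hφ : ∀ ω, φ ω ∈ Set.Icc (0:ℝ) 1) (h : C(Ω, E)) :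
    ‖cmul φ h‖ ≤ ‖h‖ := by
  refine (ContinuousMap.norm_le _ (norm_nonneg h)).mpr fun ω => ?_
  rw [cmul_apply, norm_smul]
  calc ‖φ ω‖ * ‖h ω‖ ≤ 1 * ‖h ω‖ := by
        have := (hφ ω).1; have := (hφ ω).2
        gcongr
        rw [Real.norm_eq_abs, abs_le]; constructor <;> linarith
    _ ≤ ‖h‖ := by rw [one_mul]; exact h.norm_coe_le_norm ω

lemma cont_integrable {g : Ω → ℝ} (hg : Continuous g) (μ : Measure Ω) [IsFiniteMeasure μ] :
    Integrable g μ :=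
  integrableOn_univ.mp (hg.continuousOn.integrableOn_compact isCompact_univ)


lemma tensor_approx (f : C(Ω, E)) {η : ℝ} (hη : 0 < η) :
    ∃ (t : Finset Ω) (g : {a // a ∈ t} → C(Ω, ℝ)),
      (∀ i, ∀ ω, g i ω ∈ Set.Icc (0:ℝ) 1) ∧
      ‖f - ∑ i : {a // a ∈ t}, tens (g i) (f i.1)‖ ≤ η := by
  classical
  set U : Ω → Set Ω := fun z => f ⁻¹' Metric.ball (f z) η with hU
  have hUo : ∀ z, IsOpen (U z) := fun z => (Metric.isOpen_ball).preimage (map_continuous f)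
  have hcov : univ ⊆ ⋃ z, U z := fun ω _ =>
    mem_iUnion.mpr ⟨ω, by simp [hU, Metric.mem_ball, hη]⟩
  obtain ⟨t, ht⟩ := isCompact_univ.elim_finite_subcover U hUo hcov
  have ht' : (univ : Set Ω) ⊆ ⋃ i : {a // a ∈ t}, U i.1 := by
    rw [Set.iUnion_subtype]; exact ht
  obtain ⟨p, hp⟩ := PartitionOfUnity.exists_isSubordinate isClosed_univ
    (fun i : {a // a ∈ t} => U i.1) (fun i => hUo i.1) ht'
  refine ⟨t, fun i => p i, fun i ω => ⟨p.nonneg i ω, p.le_one i ω⟩, ?_⟩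
  refine (ContinuousMap.norm_le _ hη.le).mpr fun ω => ?_
  have hsum : ∑ i : {a // a ∈ t}, p i ω = 1 := by
    rw [← finsum_eq_sum_of_fintype]; exact p.sum_eq_one (mem_univ ω)
  have hval : (f - ∑ i : {a // a ∈ t}, tens (p i) (f i.1)) ω
      = ∑ i : {a // a ∈ t}, p i ω • (f ω - f i.1) := by
    simp only [ContinuousMap.sub_apply, ContinuousMap.sum_apply, tens_apply, smul_sub,
      Finset.sum_sub_distrib]
    congr 1
    rw [← Finset.sum_smul, hsum, one_smul]
  rw [hval]
  calc ‖∑ i : {a // a ∈ t}, p i ω • (f ω - f i.1)‖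
      ≤ ∑ i : {a // a ∈ t}, ‖p i ω • (f ω - f i.1)‖ := norm_sum_le _ _
    _ ≤ ∑ i : {a // a ∈ t}, p i ω * η := by
        refine Finset.sum_le_sum fun i _ => ?_
        rw [norm_smul, Real.norm_eq_abs, abs_of_nonneg (p.nonneg i ω)]
        rcases eq_or_lt_of_le (p.nonneg i ω) with h0 | h0
        · rw [← h0]; simp
        · have hωU : ω ∈ U i.1 := hp i (subset_tsupport _ (by simpa using h0.ne'))
          have : dist (f ω) (f i.1) < η := by simpa [hU, Metric.mem_ball] using hωU
          have : ‖f ω - f i.1‖ ≤ η := by rw [← dist_eq_norm]; exact this.le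
          exact mul_le_mul_of_nonneg_left this (p.nonneg i ω)
    _ = η := by rw [← Finset.sum_mul, hsum, one_mul]

/-- Basic estimate: replacing `χ_A` by an Urysohn function `φ` costs at most `μ (U \ K)`. -/
lemma int_est (μ : Measure Ω) [IsFiniteMeasure μ] (A K U : Set Ω) (hA : MeasurableSet A)
    (hUo : IsOpen U) (hKc : IsClosed K) (hKA : K ⊆ A) (hAU : A ⊆ U)
    (g φ : C(Ω, ℝ)) (hg : ∀ ω, g ω ∈ Set.Icc (0:ℝ) 1)
    (hφ0 : EqOn φ 0 Uᶜ) (hφ1 : EqOn φ 1 K) (hφ : ∀ ω, φ ω ∈ Set.Icc (0:ℝ) 1) :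
    |(∫ ω in A, g ω ∂μ) - ∫ ω, φ ω * g ω ∂μ| ≤ (μ (U \ K)).toReal := by
  have hint1 : Integrable (A.indicator fun ω => g ω) μ :=
    (cont_integrable (map_continuous g) μ).indicator hA
  have hint2 : Integrable (fun ω => φ ω * g ω) μ :=
    cont_integrable ((map_continuous φ).mul (map_continuous g)) μ
  have hUK : MeasurableSet (U \ K) := hUo.measurableSet.diff hKc.measurableSet
  rw [← integral_indicator hA, ← integral_sub hint1 hint2]
  have hptw : ∀ ω, |A.indicator (fun ω => g ω) ω - φ ω * g ω|
      ≤ (U \ K).indicator (fun _ => (1:ℝ)) ω := by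
    intro ω
    rcases Classical.em (ω ∈ K) with hωK | hωK
    · have h1 : ω ∈ A := hKA hωK
      have : φ ω = 1 := hφ1 hωK
      have hnm : ω ∉ U \ K := fun h => h.2 hωK
      simp [Set.indicator_of_mem h1, Set.indicator_of_notMem hnm, this]
    · rcases Classical.em (ω ∈ U) with hωU | hωU
      · have hmem : ω ∈ U \ K := ⟨hωU, hωK⟩
        rw [Set.indicator_of_mem hmem]
        have h2 := (hg ω).1; have h3 := (hg ω).2
        have h4 := (hφ ω).1; have h5 := (hφ ω).2
        rcases Classical.em (ω ∈ A) with hωA | hωA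
        · rw [Set.indicator_of_mem hωA]
          rw [abs_le]; constructor <;> nlinarith
        · rw [Set.indicator_of_notMem hωA]
          rw [abs_le]; constructor <;> nlinarith
      · have h1 : ω ∉ A := fun h => hωU (hAU h)
        have h6 : φ ω = 0 := hφ0 hωU
        have : ω ∉ U \ K := fun h => hωU h.1
        simp [Set.indicator_of_notMem h1, Set.indicator_of_notMem this, h6]
  calc |∫ ω, (A.indicator (fun ω => g ω) ω - φ ω * g ω) ∂μ|
      ≤ ∫ ω, |A.indicator (fun ω => g ω) ω - φ ω * g ω| ∂μ := by
          simpa [Real.norm_eq_abs] using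
            norm_integral_le_integral_norm (μ := μ)
              (fun ω => A.indicator (fun ω => g ω) ω - φ ω * g ω)
    _ ≤ ∫ ω, (U \ K).indicator (fun _ => (1:ℝ)) ω ∂μ := by
        refine integral_mono (hint1.sub hint2).abs ?_ hptw
        exact (integrable_const (1:ℝ)).indicator hUK
    _ = (μ (U \ K)).toReal := by
        rw [integral_indicator_const _ hUK]; simp; rfl

/-- If `K ⊆ A ⊆ Ul`, `σ A < σ Kl + ε`, `σ Ul < σ A + ε` and `S ⊆ Ul \ Kl` then
`σ S ≤ ε + ε`. -/
lemma measure_small_diff (σ : Measure Ω) [IsFiniteMeasure σ] (Aset Kl Ul S : Set Ω)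
    (hAm : MeasurableSet Aset) (hKlc : IsClosed Kl)
    (hKA : Kl ⊆ Aset) (hAU : Aset ⊆ Ul) {εE : ℝ≥0∞}
    (h1 : σ Aset < σ Kl + εE) (h2 : σ Ul < σ Aset + εE) (hS : S ⊆ Ul \ Kl) :
    σ S ≤ εE + εE := by
  have e1 : σ (Ul \ Aset) + σ Aset = σ Ul := by
    have := measure_diff_add_inter Ul hAm (μ := σ)
    rwa [Set.inter_eq_self_of_subset_right hAU] at this
  have e2 : σ (Aset \ Kl) + σ Kl = σ Aset := by
    have := measure_diff_add_inter Aset hKlc.measurableSet (μ := σ)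
    rwa [Set.inter_eq_self_of_subset_right hKA] at this
  have h3 : σ (Ul \ Aset) < εE := by
    have : σ (Ul \ Aset) + σ Aset < εE + σ Aset := by rw [e1, add_comm εE (σ Aset)] at *; exact h2
    exact (ENNReal.add_lt_add_iff_right (measure_ne_top σ Aset)).mp this
  have h4 : σ (Aset \ Kl) < εE := by
    have : σ (Aset \ Kl) + σ Kl < εE + σ Kl := by rw [e2, add_comm εE (σ Kl)] at *; exact h1
    exact (ENNReal.add_lt_add_iff_right (measure_ne_top σ Kl)).mp this
  have hsub : S ⊆ (Ul \ Aset) ∪ (Aset \ Kl) := by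
    intro ω hω
    rcases hS hω with ⟨hU, hK⟩
    by_cases hA : ω ∈ Aset
    · exact Or.inr ⟨hA, hK⟩
    · exact Or.inl ⟨hU, hA⟩
  calc σ S ≤ σ ((Ul \ Aset) ∪ (Aset \ Kl)) := measure_mono hsub
    _ ≤ σ (Ul \ Aset) + σ (Aset \ Kl) := measure_union_le _ _
    _ ≤ εE + εE := add_le_add h3.le h4.le

lemma restrict_tens_rep (m rm : RieszPair Ω E) (Aset : Set Ω) (hAm : MeasurableSet Aset)
    (hmeas : ∀ B : Set Ω, rm.meas B = m.meas (Aset ∩ B)) (e : E) :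
    ∃ μ ν : Measure Ω, IsFiniteMeasure μ ∧ IsFiniteMeasure ν ∧ μ.Regular ∧ ν.Regular ∧
      (∀ g : C(Ω, ℝ), m.toFunctional (tens g e) = (∫ ω, g ω ∂μ) - ∫ ω, g ω ∂ν) ∧
      (∀ g : C(Ω, ℝ), rm.toFunctional (tens g e)
          = (∫ ω in Aset, g ω ∂μ) - ∫ ω in Aset, g ω ∂ν) := by
  obtain ⟨μ, ν, hμf, hνf, hμr, hνr, hm1, hm2⟩ := m.scalarMeasure e
  obtain ⟨μ', ν', hμ'f, hν'f, hμ'r, hν'r, hr1, hr2⟩ := rm.scalarMeasure e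
  have key : μ' + ν.restrict Aset = ν' + μ.restrict Aset := by
    ext B hB
    have h1 := hr1 B hB
    rw [hmeas B] at h1
    have h2 := hm1 (Aset ∩ B) (hAm.inter hB)
    rw [h2] at h1
    simp only [Measure.add_apply, Measure.restrict_apply hB, Set.inter_comm B Aset]
    rw [← ENNReal.toReal_eq_toReal_iff' (by finiteness) (by finiteness),
      ENNReal.toReal_add (by finiteness) (by finiteness),
      ENNReal.toReal_add (by finiteness) (by finiteness)]
    linarith
  refine ⟨μ, ν, hμf, hνf, hμr, hνr, fun g => hm2 g, fun g => ?_⟩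
  have h3 : rm.toFunctional (tens g e) = (∫ ω, g ω ∂μ') - ∫ ω, g ω ∂ν' := hr2 g
  have h4 : (∫ ω, g ω ∂(μ' + ν.restrict Aset)) = ∫ ω, g ω ∂(ν' + μ.restrict Aset) := by
    rw [key]
  rw [integral_add_measure (cont_integrable (map_continuous g) μ')
      (cont_integrable (map_continuous g) _),
    integral_add_measure (cont_integrable (map_continuous g) ν')
      (cont_integrable (map_continuous g) _)] at h4
  rw [h3]
  linarith

lemma key_approx (m rm : RieszPair Ω E) (Aset : Set Ω) (hAm : MeasurableSet Aset)
    (hmeas : ∀ B : Set Ω, rm.meas B = m.meas (Aset ∩ B)) (f : C(Ω, E)) {δ : ℝ} (hδ : 0 < δ) :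
    ∃ φ : C(Ω, ℝ), (∀ ω, φ ω ∈ Set.Icc (0:ℝ) 1) ∧
      |rm.toFunctional f - m.toFunctional (cmul φ f)| ≤ δ := by
  classical
  set Cr := ‖rm.toFunctional‖ with hCr
  set Cm := ‖m.toFunctional‖ with hCm
  have hCr0 : 0 ≤ Cr := norm_nonneg _
  have hCm0 : 0 ≤ Cm := norm_nonneg _
  set η : ℝ := δ / (2 * (Cr + Cm + 1)) with hηdef
  have hη : 0 < η := by positivity
  obtain ⟨t, g, hg01, hfs⟩ := tensor_approx f hη
  set s : C(Ω, E) := ∑ i : {a // a ∈ t}, tens (g i) (f i.1) with hs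
  choose μ ν hμf hνf hμr hνr hmrep hrrep using
    fun i : {a // a ∈ t} => restrict_tens_rep m rm Aset hAm hmeas (f i.1)
  set n : ℕ := Fintype.card {a // a ∈ t} with hn
  set ε' : ℝ := δ / (8 * (n + 1)) with hε'def
  have hε' : 0 < ε' := by positivity
  set εE : ℝ≥0∞ := ENNReal.ofReal ε' with hεE
  have hεE0 : εE ≠ 0 := by
    simp only [hεE, ne_eq, ENNReal.ofReal_eq_zero, not_le]; exact hε'
  -- inner and outer approximations for each of the finitely many measures
  have hKμex : ∀ i, ∃ Kl, Kl ⊆ Aset ∧ IsCompact Kl ∧ μ i Aset < μ i Kl + εE := by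
    intro i; haveI := hμf i; haveI := hμr i
    obtain ⟨Kl, h1, h2, h3⟩ := hAm.exists_isCompact_lt_add (μ := μ i) (measure_ne_top _ _) hεE0
    exact ⟨Kl, h1, h2, h3⟩
  have hKνex : ∀ i, ∃ Kl, Kl ⊆ Aset ∧ IsCompact Kl ∧ ν i Aset < ν i Kl + εE := by
    intro i; haveI := hνf i; haveI := hνr i
    obtain ⟨Kl, h1, h2, h3⟩ := hAm.exists_isCompact_lt_add (μ := ν i) (measure_ne_top _ _) hεE0
    exact ⟨Kl, h1, h2, h3⟩
  have hUμex : ∀ i, ∃ Ul, Aset ⊆ Ul ∧ IsOpen Ul ∧ μ i Ul < μ i Aset + εE := by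
    intro i; haveI := hμf i; haveI := hμr i
    obtain ⟨Ul, h1, h2, h3⟩ := Aset.exists_isOpen_lt_add (μ := μ i) (measure_ne_top _ _) hεE0
    exact ⟨Ul, h1, h2, h3⟩
  have hUνex : ∀ i, ∃ Ul, Aset ⊆ Ul ∧ IsOpen Ul ∧ ν i Ul < ν i Aset + εE := by
    intro i; haveI := hνf i; haveI := hνr i
    obtain ⟨Ul, h1, h2, h3⟩ := Aset.exists_isOpen_lt_add (μ := ν i) (measure_ne_top _ _) hεE0
    exact ⟨Ul, h1, h2, h3⟩
  choose Kμ hKμA hKμc hKμlt using hKμex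
  choose Kν hKνA hKνc hKνlt using hKνex
  choose Uμ hUμA hUμo hUμlt using hUμex
  choose Uν hUνA hUνo hUνlt using hUνex
  set K : Set Ω := ⋃ i, Kμ i ∪ Kν i with hK
  set U : Set Ω := ⋂ i, Uμ i ∩ Uν i with hU
  have hKc : IsCompact K := isCompact_iUnion fun i => (hKμc i).union (hKνc i)
  have hUo : IsOpen U := isOpen_iInter_of_finite fun i => (hUμo i).inter (hUνo i)
  have hKA : K ⊆ Aset := iUnion_subset fun i => union_subset (hKμA i) (hKνA i)
  have hAU : Aset ⊆ U := subset_iInter fun i => subset_inter (hUμA i) (hUνA i)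
  obtain ⟨φ, hφ0, hφ1, hφ⟩ := exists_continuous_zero_one_of_isClosed
    hUo.isClosed_compl hKc.isClosed (disjoint_compl_left_iff.mpr (hKA.trans hAU))
  refine ⟨φ, hφ, ?_⟩
  -- the measures of `U \ K` are uniformly small
  have hμUK : ∀ i, (μ i (U \ K)).toReal ≤ 2 * ε' := by
    intro i; haveI := hμf i
    have h := measure_small_diff (μ i) Aset (Kμ i) (Uμ i) (U \ K) hAm (hKμc i).isClosed
      (hKμA i) (hUμA i) (hKμlt i) (hUμlt i)
      (diff_subset_diff (iInter_subset_of_subset i inter_subset_left)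
        ((subset_iUnion _ i).trans' subset_union_left))
    have := ENNReal.toReal_mono (by finiteness) h
    rwa [ENNReal.toReal_add (by finiteness) (by finiteness), hεE,
      ENNReal.toReal_ofReal hε'.le, ← two_mul] at this
  have hνUK : ∀ i, (ν i (U \ K)).toReal ≤ 2 * ε' := by
    intro i; haveI := hνf i
    have h := measure_small_diff (ν i) Aset (Kν i) (Uν i) (U \ K) hAm (hKνc i).isClosed
      (hKνA i) (hUνA i) (hKνlt i) (hUνlt i)
      (diff_subset_diff (iInter_subset_of_subset i inter_subset_right)
        ((subset_iUnion _ i).trans' subset_union_right))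
    have := ENNReal.toReal_mono (by finiteness) h
    rwa [ENNReal.toReal_add (by finiteness) (by finiteness), hεE,
      ENNReal.toReal_ofReal hε'.le, ← two_mul] at this
  -- middle term estimate
  have hrm_s : rm.toFunctional s
      = ∑ i : {a // a ∈ t}, ((∫ ω in Aset, g i ω ∂(μ i)) - ∫ ω in Aset, g i ω ∂(ν i)) := by
    rw [hs, map_sum]; exact Finset.sum_congr rfl fun i _ => hrrep i (g i)
  have hm_s : m.toFunctional (cmul φ s)
      = ∑ i : {a // a ∈ t}, ((∫ ω, φ ω * g i ω ∂(μ i)) - ∫ ω, φ ω * g i ω ∂(ν i)) := by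
    rw [hs, cmul_sum, map_sum]
    refine Finset.sum_congr rfl fun i _ => ?_
    rw [cmul_tens]
    have h := hmrep i (φ * g i)
    simpa [ContinuousMap.mul_apply] using h
  have hmid : |rm.toFunctional s - m.toFunctional (cmul φ s)| ≤ δ / 2 := by
    rw [hrm_s, hm_s, ← Finset.sum_sub_distrib]
    calc |∑ i : {a // a ∈ t}, (((∫ ω in Aset, g i ω ∂(μ i)) - ∫ ω in Aset, g i ω ∂(ν i))
            - ((∫ ω, φ ω * g i ω ∂(μ i)) - ∫ ω, φ ω * g i ω ∂(ν i)))|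
        ≤ ∑ i : {a // a ∈ t}, |(((∫ ω in Aset, g i ω ∂(μ i)) - ∫ ω in Aset, g i ω ∂(ν i))
            - ((∫ ω, φ ω * g i ω ∂(μ i)) - ∫ ω, φ ω * g i ω ∂(ν i)))| :=
          Finset.abs_sum_le_sum_abs _ _
      _ ≤ ∑ _i : {a // a ∈ t}, (2 * ε' + 2 * ε') := by
          refine Finset.sum_le_sum fun i _ => ?_
          haveI := hμf i; haveI := hνf i
          have e1 : |(∫ ω in Aset, g i ω ∂(μ i)) - ∫ ω, φ ω * g i ω ∂(μ i)|
              ≤ (μ i (U \ K)).toReal :=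
            int_est (μ i) Aset K U hAm hUo hKc.isClosed hKA hAU (g i) φ (hg01 i) hφ0 hφ1 hφ
          have e2 : |(∫ ω in Aset, g i ω ∂(ν i)) - ∫ ω, φ ω * g i ω ∂(ν i)|
              ≤ (ν i (U \ K)).toReal :=
            int_est (ν i) Aset K U hAm hUo hKc.isClosed hKA hAU (g i) φ (hg01 i) hφ0 hφ1 hφ
          have := hμUK i; have := hνUK i
          have habs : |(((∫ ω in Aset, g i ω ∂(μ i)) - ∫ ω in Aset, g i ω ∂(ν i))
              - ((∫ ω, φ ω * g i ω ∂(μ i)) - ∫ ω, φ ω * g i ω ∂(ν i)))|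
              ≤ |(∫ ω in Aset, g i ω ∂(μ i)) - ∫ ω, φ ω * g i ω ∂(μ i)|
                + |(∫ ω in Aset, g i ω ∂(ν i)) - ∫ ω, φ ω * g i ω ∂(ν i)| := by
            rw [show (((∫ ω in Aset, g i ω ∂(μ i)) - ∫ ω in Aset, g i ω ∂(ν i))
              - ((∫ ω, φ ω * g i ω ∂(μ i)) - ∫ ω, φ ω * g i ω ∂(ν i)))
              = ((∫ ω in Aset, g i ω ∂(μ i)) - ∫ ω, φ ω * g i ω ∂(μ i))
                - ((∫ ω in Aset, g i ω ∂(ν i)) - ∫ ω, φ ω * g i ω ∂(ν i)) from by ring]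
            exact abs_sub _ _
          linarith
      _ = n * (4 * ε') := by
          rw [Finset.sum_const]; simp [hn, Finset.card_univ]; ring
      _ ≤ δ / 2 := by
          have hpos : (0:ℝ) < (n:ℝ) + 1 := by positivity
          rw [hε'def]
          have hrw : (n:ℝ) * (4 * (δ / (8 * ((n:ℝ) + 1)))) = δ * ((n:ℝ) / (2 * ((n:ℝ)+1))) := by
            field_simp; ring
          rw [hrw]
          have h2 : (n:ℝ) / (2 * ((n:ℝ)+1)) ≤ 1/2 := by
            rw [div_le_div_iff₀ (by positivity) (by norm_num)]
            linarith
          calc δ * ((n:ℝ) / (2*((n:ℝ)+1))) ≤ δ * (1/2) :=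
                mul_le_mul_of_nonneg_left h2 hδ.le
            _ = δ/2 := by ring
  -- final assembly
  have hsplit : rm.toFunctional f - m.toFunctional (cmul φ f)
      = (rm.toFunctional (f - s) - m.toFunctional (cmul φ (f - s)))
        + (rm.toFunctional s - m.toFunctional (cmul φ s)) := by
    rw [cmul_sub, map_sub, map_sub]; ring
  have e1 : |rm.toFunctional (f - s)| ≤ Cr * η := by
    calc |rm.toFunctional (f - s)| = ‖rm.toFunctional (f - s)‖ := (Real.norm_eq_abs _).symm
      _ ≤ Cr * ‖f - s‖ := rm.toFunctional.le_opNorm _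
      _ ≤ Cr * η := mul_le_mul_of_nonneg_left hfs hCr0
  have e2 : |m.toFunctional (cmul φ (f - s))| ≤ Cm * η := by
    calc |m.toFunctional (cmul φ (f - s))| = ‖m.toFunctional (cmul φ (f - s))‖ :=
          (Real.norm_eq_abs _).symm
      _ ≤ Cm * ‖cmul φ (f - s)‖ := m.toFunctional.le_opNorm _
      _ ≤ Cm * ‖f - s‖ := mul_le_mul_of_nonneg_left (norm_cmul_le φ hφ _) hCm0
      _ ≤ Cm * η := mul_le_mul_of_nonneg_left hfs hCm0
  have htot : |rm.toFunctional f - m.toFunctional (cmul φ f)|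
      ≤ Cr * η + Cm * η + δ / 2 := by
    rw [hsplit]
    calc |(rm.toFunctional (f - s) - m.toFunctional (cmul φ (f - s)))
          + (rm.toFunctional s - m.toFunctional (cmul φ s))|
        ≤ |rm.toFunctional (f - s) - m.toFunctional (cmul φ (f - s))|
          + |rm.toFunctional s - m.toFunctional (cmul φ s)| := abs_add_le _ _
      _ ≤ (|rm.toFunctional (f - s)| + |m.toFunctional (cmul φ (f - s))|) + (δ / 2) := by
          have := abs_sub (rm.toFunctional (f - s)) (m.toFunctional (cmul φ (f - s)))
          linarith
      _ ≤ Cr * η + Cm * η + δ / 2 := by linarith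
  have harith : Cr * η + Cm * η ≤ δ / 2 := by
    have hpos : (0:ℝ) < 2 * (Cr + Cm + 1) := by positivity
    rw [hηdef]
    have hrw : Cr * (δ / (2 * (Cr + Cm + 1))) + Cm * (δ / (2 * (Cr + Cm + 1)))
        = δ * ((Cr + Cm) / (2 * (Cr + Cm + 1))) := by field_simp
    rw [hrw]
    have h2 : (Cr + Cm) / (2 * (Cr + Cm + 1)) ≤ 1/2 := by
      rw [div_le_div_iff₀ hpos (by norm_num)]
      linarith
    calc δ * ((Cr + Cm) / (2 * (Cr + Cm + 1))) ≤ δ * (1/2) :=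
          mul_le_mul_of_nonneg_left h2 hδ.le
      _ ≤ δ / 2 := by linarith
  linarith



/-- Uniform bound on bounded-multiplier partial sums of a WUC series. -/
lemma wuc_multiplier_bound {X : Type*} [NormedAddCommGroup X] [NormedSpace ℝ X]
    (x : ℕ → X) (hx : IsWUCSeries X x) :
    ∃ C : ℝ, ∀ (F : Finset ℕ) (b : ℕ → ℝ), (∀ n, |b n| ≤ 1) →
      ‖∑ n ∈ F, b n • x n‖ ≤ C := by
  classical
  set ι := {p : Finset ℕ × (ℕ → ℝ) // ∀ n, |p.2 n| ≤ 1} with hι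
  set g : ι → StrongDual ℝ (StrongDual ℝ X) :=
    fun p => NormedSpace.inclusionInDoubleDualLi ℝ (∑ n ∈ p.1.1, p.1.2 n • x n) with hg
  have hpt : ∀ f : StrongDual ℝ X, ∃ C, ∀ p : ι, ‖g p f‖ ≤ C := by
    intro f
    refine ⟨∑' n, |f (x n)|, fun p => ?_⟩
    have h1 : g p f = f (∑ n ∈ p.1.1, p.1.2 n • x n) := rfl
    rw [h1, map_sum]
    calc ‖∑ n ∈ p.1.1, f (p.1.2 n • x n)‖ ≤ ∑ n ∈ p.1.1, ‖f (p.1.2 n • x n)‖ :=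
          norm_sum_le _ _
      _ ≤ ∑ n ∈ p.1.1, |f (x n)| := by
          refine Finset.sum_le_sum fun n _ => ?_
          rw [_root_.map_smul, smul_eq_mul, Real.norm_eq_abs, abs_mul]
          calc |p.1.2 n| * |f (x n)| ≤ 1 * |f (x n)| := by
                have := p.2 n; have := abs_nonneg (f (x n)); nlinarith
            _ = |f (x n)| := one_mul _
      _ ≤ ∑' n, |f (x n)| := Summable.sum_le_tsum _ (fun n _ => abs_nonneg _) (hx f)
  obtain ⟨C, hC⟩ := banach_steinhaus hpt
  refine ⟨C, fun F b hb => ?_⟩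
  have h2 := hC ⟨(F, b), hb⟩
  rwa [hg, LinearIsometry.norm_map] at h2


end AuxiliaryLemmas

/-- Let `H` be a (V)-subset of `M(Ω,E*) ≅ C(Ω,E)*` and `(A_m)_{m ∈ H}` a
collection of Borel subsets of `Ω` indexed by `H`.  Then `{ m·χ_{A_m} : m ∈ H }` is again a
(V)-subset of `M(Ω,E*)`, where `m·χ_A` is the measure `B ↦ m(A ∩ B)`. -/
theorem isVSet_restrict
    (Ω : Type*) [TopologicalSpace Ω] [CompactSpace Ω] [T2Space Ω]
    [MeasurableSpace Ω] [BorelSpace Ω]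
    (E : Type*) [NormedAddCommGroup E] [NormedSpace ℝ E] [CompleteSpace E]
    (H : Set (RieszPair Ω E))
    (hH : IsVSet C(Ω, E) (RieszPair.toFunctional '' H))
    (A : RieszPair Ω E → Set Ω) (hA : ∀ m ∈ H, MeasurableSet (A m))
    (r : RieszPair Ω E → RieszPair Ω E)
    (hr : ∀ m ∈ H, ∀ B : Set Ω, (r m).meas B = m.meas (A m ∩ B)) :
    IsVSet C(Ω, E) (RieszPair.toFunctional '' (r '' H)) := by
  classical
  intro x hx ε hε
  by_contra hcon
  push_neg at hcon
  have hsel : ∀ N : ℕ, ∃ n ≥ N, ∃ m ∈ H, ε < |(r m).toFunctional (x n)| := by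
    intro N
    obtain ⟨n, hn, f, hfmem, hbig⟩ := hcon N
    obtain ⟨y, hy, rfl⟩ := hfmem
    obtain ⟨m0, hm0, rfl⟩ := hy
    exact ⟨n, hn, m0, hm0, hbig⟩
  choose nsel hnsel msel hmsel hbig using hsel
  -- a strictly increasing selection
  let Nseq : ℕ → ℕ := fun k => Nat.rec 0 (fun _ prev => nsel prev + 1) k
  let nk : ℕ → ℕ := fun k => nsel (Nseq k)
  have hNsucc : ∀ k, Nseq (k + 1) = nk k + 1 := fun k => rfl
  have hmono : StrictMono nk := strictMono_nat_of_lt_succ fun k => by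
    have h1 : nk (k + 1) ≥ Nseq (k + 1) := hnsel _
    rw [hNsucc] at h1
    omega
  let mk : ℕ → RieszPair Ω E := fun k => msel (Nseq k)
  have hmkH : ∀ k, mk k ∈ H := fun k => hmsel _
  have hbigk : ∀ k, ε < |(r (mk k)).toFunctional (x (nk k))| := fun k => hbig _
  -- Urysohn correctors from the key approximation lemma
  have hkey : ∀ k : ℕ, ∃ φ : C(Ω, ℝ), (∀ ω, φ ω ∈ Set.Icc (0:ℝ) 1) ∧
      |(r (mk k)).toFunctional (x (nk k))
        - (mk k).toFunctional (cmul φ (x (nk k)))| ≤ ε / 2 := fun k =>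
    key_approx (mk k) (r (mk k)) (A (mk k)) (hA _ (hmkH k)) (hr _ (hmkH k))
      (x (nk k)) (half_pos hε)
  choose φ hφIcc hφclose using hkey
  let y : ℕ → C(Ω, E) := fun k => cmul (φ k) (x (nk k))
  -- the corrected subsequence is again WUC
  obtain ⟨C, hC⟩ := wuc_multiplier_bound x hx
  have hC0 : 0 ≤ C := le_trans (by simp) (hC ∅ (fun _ => 0) (fun _ => by simp))
  have hyWUC : IsWUCSeries C(Ω, E) y := by
    intro F
    refine summable_of_sum_le (c := ‖F‖ * C) (fun k => abs_nonneg _) fun G => ?_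
    set sgn : ℕ → ℝ := fun k => if 0 ≤ F (y k) then (1:ℝ) else -1 with hsgn
    have habs : ∀ k, |F (y k)| = sgn k * F (y k) := by
      intro k
      by_cases h : 0 ≤ F (y k)
      · rw [hsgn]; simp [h, abs_of_nonneg h]
      · rw [hsgn]; simp [h, abs_of_neg (not_le.mp h)]
    have hnorm : ‖∑ k ∈ G, sgn k • y k‖ ≤ C := by
      refine (ContinuousMap.norm_le _ hC0).mpr fun ω => ?_
      set b : ℕ → ℝ := Function.extend nk (fun k => sgn k * φ k ω) 0 with hb
      have hb1 : ∀ j, |b j| ≤ 1 := by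
        intro j
        rcases Classical.em (∃ k, nk k = j) with ⟨k, rfl⟩ | hex
        · rw [hb, hmono.injective.extend_apply]
          have h1 := (hφIcc k ω).1; have h2 := (hφIcc k ω).2
          have : |sgn k| = 1 := by
            rw [hsgn]; by_cases h : 0 ≤ F (y k) <;> simp [h]
          rw [abs_mul, this, one_mul, abs_le]; constructor <;> linarith
        · rw [hb, Function.extend_apply' _ _ _ hex]; simp
      have hbval : ∀ k, b (nk k) = sgn k * φ k ω := fun k =>
        hmono.injective.extend_apply _ _ _
      have hval : (∑ k ∈ G, sgn k • y k) ω
          = (∑ j ∈ G.image nk, b j • x j) ω := by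
        rw [ContinuousMap.coe_sum, Finset.sum_apply, ContinuousMap.coe_sum, Finset.sum_apply,
          Finset.sum_image (fun k _ k' _ h => hmono.injective h)]
        refine Finset.sum_congr rfl fun k _ => ?_
        simp only [ContinuousMap.smul_apply, cmul_apply, y, hbval k, smul_smul]
      rw [hval]
      calc ‖(∑ j ∈ G.image nk, b j • x j) ω‖ ≤ ‖∑ j ∈ G.image nk, b j • x j‖ :=
            ContinuousMap.norm_coe_le_norm _ ω
        _ ≤ C := hC _ b hb1
    calc ∑ k ∈ G, |F (y k)| = ∑ k ∈ G, sgn k * F (y k) :=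
          Finset.sum_congr rfl fun k _ => habs k
      _ = F (∑ k ∈ G, sgn k • y k) := by
          rw [map_sum]
          exact (Finset.sum_congr rfl fun k _ => by
            rw [_root_.map_smul, smul_eq_mul]).symm
      _ ≤ |F (∑ k ∈ G, sgn k • y k)| := le_abs_self _
      _ = ‖F (∑ k ∈ G, sgn k • y k)‖ := (Real.norm_eq_abs _).symm
      _ ≤ ‖F‖ * ‖∑ k ∈ G, sgn k • y k‖ := F.le_opNorm _
      _ ≤ ‖F‖ * C := mul_le_mul_of_nonneg_left hnorm (norm_nonneg F)
  -- contradiction with `H` being a (V)-set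
  obtain ⟨N, hN⟩ := hH y hyWUC (ε / 4) (by linarith)
  have hmem : (mk N).toFunctional ∈ RieszPair.toFunctional '' H := ⟨mk N, hmkH N, rfl⟩
  have h1 : |(mk N).toFunctional (y N)| ≤ ε / 4 := hN N le_rfl _ hmem
  have h2 := hφclose N
  have h3 := hbigk N
  have h4 : |(r (mk N)).toFunctional (x (nk N))|
      ≤ |(r (mk N)).toFunctional (x (nk N)) - (mk N).toFunctional (y N)|
        + |(mk N).toFunctional (y N)| := by
    have := abs_sub_abs_le_abs_sub ((r (mk N)).toFunctional (x (nk N)))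
      ((mk N).toFunctional (y N))
    linarith [abs_nonneg ((mk N).toFunctional (y N))]
  have : |(r (mk N)).toFunctional (x (nk N))| ≤ ε / 2 + ε / 4 := by
    have hy' : (mk N).toFunctional (y N) = (mk N).toFunctional (cmul (φ N) (x (nk N))) := rfl
    rw [hy'] at h4 h1
    linarith
  linarith
end
end

section
/- Let Ω be a compact Hausdorff space and E a Banach space. If ∑ₙ eₙ is a WUC series in C(Ω) (scalar-valued continuous functions) and (θₙ) is a sequence in C(Ω,E) with ‖θₙ‖ ≤ 1 for all n, then the series ∑ₙ ψₙ with ψₙ(ω) = eₙ(ω)·θₙ(ω) is a WUC series in C(Ω,E). -/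
open Filter Topology

set_option autoImplicit false

noncomputable section

/-- If `∑ eₙ` is a WUC series in `C(Ω)` and `(θₙ)` is a sequence in
`C(Ω, E)` with `‖θₙ‖ ≤ 1` for all `n`, then the series `∑ ψₙ`, where
`ψₙ(ω) = eₙ(ω) • θₙ(ω)`, is a WUC series in `C(Ω, E)`. -/
theorem isWUCSeries_smul
    (Ω : Type*) [TopologicalSpace Ω] [CompactSpace Ω]
    (E : Type*) [NormedAddCommGroup E] [NormedSpace ℝ E] [CompleteSpace E]
    (e : ℕ → C(Ω, ℝ)) (he : IsWUCSeries C(Ω, ℝ) e)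
    (θ : ℕ → C(Ω, E)) (hθ : ∀ n, ‖θ n‖ ≤ 1) :
    IsWUCSeries C(Ω, E)
      (fun n => ⟨fun ω => e n ω • θ n ω, ((e n).continuous.smul (θ n).continuous)⟩) := by
  classical
  set ψ : ℕ → C(Ω, E) :=
    fun n => ⟨fun ω => e n ω • θ n ω, ((e n).continuous.smul (θ n).continuous)⟩ with hψ
  -- Step 1: uniform boundedness of signed partial sums of `e` (Banach–Steinhaus on the bidual)
  obtain ⟨C, hC⟩ : ∃ C, ∀ (F : Finset ℕ) (s : ℕ → ℝ), (∀ n, |s n| ≤ 1) →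
      ‖∑ n ∈ F, s n • e n‖ ≤ C := by
    set g :=
      fun i : Finset ℕ × {s : ℕ → ℝ // ∀ n, |s n| ≤ 1} => NormedSpace.inclusionInDoubleDual ℝ C(Ω, ℝ) (∑ n ∈ i.1, i.2.1 n • e n) with hg
    have hb : ∀ f, ∃ B, ∀ i, ‖g i f‖ ≤ B := by
      intro f
      refine ⟨∑' n, |f (e n)|, fun i => ?_⟩
      have h1 : ‖g i f‖ = |f (∑ n ∈ i.1, i.2.1 n • e n)| := by
        rw [hg]; simp [NormedSpace.dual_def, Real.norm_eq_abs]
      rw [h1, map_sum]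
      calc |∑ n ∈ i.1, f (i.2.1 n • e n)| ≤ ∑ n ∈ i.1, |f (i.2.1 n • e n)| :=
            Finset.abs_sum_le_sum_abs _ _
        _ ≤ ∑ n ∈ i.1, |f (e n)| := by
            refine Finset.sum_le_sum fun n _ => ?_
            rw [map_smul, smul_eq_mul, abs_mul]
            exact mul_le_of_le_one_left (abs_nonneg _) (i.2.2 n)
        _ ≤ ∑' n, |f (e n)| := sum_le_hasSum i.1 (fun n _ => abs_nonneg _) (he f).hasSum
    obtain ⟨C, hC⟩ := banach_steinhaus hb
    refine ⟨C, fun F s hs => ?_⟩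
    have h1 := hC (F, ⟨s, hs⟩)
    calc ‖∑ n ∈ F, s n • e n‖
        = ‖NormedSpace.inclusionInDoubleDualLi ℝ (∑ n ∈ F, s n • e n)‖ :=
          ((NormedSpace.inclusionInDoubleDualLi ℝ).norm_map _).symm
      _ = ‖g (F, ⟨s, hs⟩)‖ := rfl
      _ ≤ C := h1
  have hC0 : 0 ≤ C := by simpa using hC ∅ 0 (by simp)
  -- Step 2: pointwise bound `∑_{n∈F} |eₙ(ω)| ≤ C`
  have hpt : ∀ (F : Finset ℕ) (ω : Ω), ∑ n ∈ F, |e n ω| ≤ C := by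
    intro F ω
    set s : ℕ → ℝ := fun n => if 0 ≤ e n ω then 1 else -1 with hs
    have hs1 : ∀ n, |s n| ≤ 1 := by
      intro n; rw [hs]; dsimp only; split <;> simp
    have heq : ∑ n ∈ F, |e n ω| = (∑ n ∈ F, s n • e n) ω := by
      simp only [ContinuousMap.sum_apply, ContinuousMap.smul_apply, smul_eq_mul]
      refine Finset.sum_congr rfl fun n _ => ?_
      by_cases h : 0 ≤ e n ω
      · simp [hs, h, abs_of_nonneg h]
      · simp [hs, h, abs_of_neg (lt_of_not_ge h)]
    rw [heq]
    calc (∑ n ∈ F, s n • e n) ω ≤ ‖(∑ n ∈ F, s n • e n) ω‖ := le_abs_self _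
      _ ≤ ‖∑ n ∈ F, s n • e n‖ := ContinuousMap.norm_coe_le_norm _ ω
      _ ≤ C := hC F s hs1
  -- Step 3: conclude summability for every functional on `C(Ω, E)`
  intro f
  refine summable_of_sum_le (c := ‖f‖ * C) (fun n => abs_nonneg _) fun F => ?_
  set t : ℕ → ℝ := fun n => if 0 ≤ f (ψ n) then 1 else -1 with ht
  have heq : ∑ n ∈ F, |f (ψ n)| = f (∑ n ∈ F, t n • ψ n) := by
    rw [map_sum]
    refine Finset.sum_congr rfl fun n _ => ?_
    rw [map_smul, smul_eq_mul]
    by_cases h : 0 ≤ f (ψ n)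
    · simp [ht, h, abs_of_nonneg h]
    · simp [ht, h, abs_of_neg (lt_of_not_ge h)]
  have hnorm : ‖∑ n ∈ F, t n • ψ n‖ ≤ C := by
    refine (ContinuousMap.norm_le _ hC0).2 fun ω => ?_
    have h1 : (∑ n ∈ F, t n • ψ n) ω = ∑ n ∈ F, t n • (e n ω • θ n ω) := by
      simp [hψ, ContinuousMap.sum_apply]
    rw [h1]
    calc ‖∑ n ∈ F, t n • (e n ω • θ n ω)‖ ≤ ∑ n ∈ F, ‖t n • (e n ω • θ n ω)‖ :=
          norm_sum_le _ _
      _ ≤ ∑ n ∈ F, |e n ω| := by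
          refine Finset.sum_le_sum fun n _ => ?_
          rw [norm_smul, norm_smul, Real.norm_eq_abs, Real.norm_eq_abs]
          have ht1 : |t n| ≤ 1 := by rw [ht]; dsimp only; split <;> simp
          have hθ1 : ‖θ n ω‖ ≤ 1 := le_trans (ContinuousMap.norm_coe_le_norm _ ω) (hθ n)
          calc |t n| * (|e n ω| * ‖θ n ω‖) ≤ 1 * (|e n ω| * 1) := by
                refine mul_le_mul ht1 ?_ (by positivity) zero_le_one
                exact mul_le_mul_of_nonneg_left hθ1 (abs_nonneg _)
            _ = |e n ω| := by ring
      _ ≤ C := hpt F ω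
  rw [heq]
  calc f (∑ n ∈ F, t n • ψ n) ≤ ‖f (∑ n ∈ F, t n • ψ n)‖ := le_abs_self _
    _ ≤ ‖f‖ * ‖∑ n ∈ F, t n • ψ n‖ := f.le_opNorm _
    _ ≤ ‖f‖ * C := mul_le_mul_of_nonneg_left hnorm (norm_nonneg f)
end
end
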